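/- Let ℓ ≥ 1, let n : Fin ℓ → ℕ, and let G = ∏_{i : Fin ℓ} FreeGroup (Fin (n i)) be a finite direct product of free groups. Let χ : G →* ℂˣ be a character, and let ℂ_χ be the one-dimensional representation of G on ℂ where g acts by multiplication by χ g. Let S = {i : Fin ℓ | the composition of χ with the canonical inclusion FreeGroup (Fin (n i)) →* G is nontrivial}. Then: (a) if S has at least two elements, the first group cohomology H¹(G, ℂ_χ) is the zero module; (b) if S = {i₀}, then finrank ℂ H¹(G, ℂ_χ) = n i₀ − 1; and (c) if S = ∅ (i.e., χ is trivial), then finrank ℂ H¹(G, ℂ_χ) = Σ_i n i. (This computes the cohomology support loci W¹_k of a product of free groups: W¹_k consists of the ℓ coordinate pieces coming from the factors with n i ≥ k+1, together with the trivial character.) -/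

import Mathlib

/-!
First group cohomology of a finite direct product of free groups with
coefficients in a rank-one representation given by a character `χ`.
-/

noncomputable section

/-- The one-dimensional representation of `G` on `ℂ` associated to a character
`χ : G →* ℂˣ`: the element `g` acts by multiplication by `χ g`. -/
def charRep {G : Type*} [Monoid G] (χ : G →* ℂˣ) : Representation ℂ G ℂ where
  toFun g := (χ g : ℂ) • LinearMap.id
  map_one' := by
    simp only [map_one, Units.val_one, one_smul]
    rfl
  map_mul' g h := by
    ext
    simp [Module.End.mul_apply, smul_smul, mul_comm]

/-!
A 1-cocycle for `ℂ_χ` on `G = ∏ Fᵢ` is determined by its restrictions to the factors, and on a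
free factor its values on the generators can be prescribed freely. Since elements of different
factors commute, `(χ a - 1) f b = (χ b - 1) f a`; hence if `χ a ≠ 1` and `f a = 0`, then `f`
vanishes on every other factor. With two factors on which `χ` is nontrivial, subtracting a
coboundary kills `f` at one such point, so every cocycle is a coboundary. With exactly one such
factor `i₀`, restriction to it identifies `Z¹` with `Z¹(F_{n i₀}, χ) ≅ ℂ^{n i₀}`, and `B¹` is
a line. For trivial `χ`, `Z¹ ≅ ∏ᵢ ℂ^{n i}` and `B¹ = 0`.
-/

open Module

section PiGroup

variable {ι : Type*} [Fintype ι] [DecidableEq ι] {G : ι → Type*} [∀ i, Group (G i)]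

theorem Subgroup.closure_iUnion_range_mulSingle :
    closure (⋃ i, Set.range (Pi.mulSingle i : G i → ∀ i, G i)) = ⊤ :=
  eq_top_iff.2 fun x _ => Finset.noncommProd_mulSingle x ▸ noncommProd_mem _ _
    fun i _ => subset_closure (Set.mem_iUnion.2 ⟨i, x i, rfl⟩)

theorem MonoidHom.ext_mulSingle {M : Type*} [Monoid M] {f g : (∀ i, G i) →* M}
    (h : ∀ i, f.comp (mulSingle G i) = g.comp (mulSingle G i)) : f = g :=
  eq_of_eqOn_dense Subgroup.closure_iUnion_range_mulSingle <| by
    simp only [Set.EqOn, Set.mem_iUnion, Set.mem_range, forall_exists_index]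
    rintro _ i x rfl
    exact DFunLike.congr_fun (h i) x

end PiGroup

namespace groupCohomology

universe u

section General

variable {k G : Type u} [CommRing k] [Group G] {A : Rep k G}

theorem cocycles₁_eq_zero_of_closure_eq_top (f : cocycles₁ A) {s : Set G}
    (hs : Subgroup.closure s = ⊤) (h : ∀ g ∈ s, f g = 0) : f = 0 := by
  suffices hf : ∀ g, f g = 0 from cocycles₁_ext hf
  intro g
  have hg : g ∈ Subgroup.closure s := hs ▸ Subgroup.mem_top g
  induction hg using Subgroup.closure_induction with
  | mem g hg => exact h g hg
  | one => exact cocycles₁_map_one f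
  | mul g h _ _ hg hh => simp_all [(mem_cocycles₁_iff f).1 f.2]
  | inv g _ hg => rw [← A.ρ.inv_self_apply g (f g⁻¹), cocycles₁_map_inv, hg, neg_zero, map_zero]

theorem cocycles₁_sub_eq_of_commute (f : cocycles₁ A) {g h : G} (hgh : Commute g h) :
    A.ρ g (f h) - f h = A.ρ h (f g) - f g := by
  have hmul := (mem_cocycles₁_iff f).1 f.2
  rw [sub_eq_sub_iff_add_eq_add, ← hmul, ← hmul, hgh.eq]

theorem subsingleton_H1_of_cocycles₁_le_coboundaries₁
    (h : cocycles₁ A ≤ coboundaries₁ A) : Subsingleton (H1 A) :=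
  ⟨fun x y => H1_induction_on x fun x => H1_induction_on y fun y =>
    (H1π_eq_iff x y).2 (h (sub_mem x.2 y.2))⟩

theorem finrank_H1_add_finrank_coboundaries₁ {k G : Type u} [Field k] [Group G] (A : Rep k G)
    [FiniteDimensional k (cocycles₁ A)] :
    finrank k (H1 A) + finrank k (coboundaries₁ A) = finrank k (cocycles₁ A) := by
  have hsurj : Function.Surjective (H1π A).hom :=
    (ModuleCat.epi_iff_surjective _).1 inferInstance
  have hker : LinearMap.ker (H1π A).hom = (coboundaries₁ A).comap (cocycles₁ A).subtype := by
    ext x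
    exact H1π_eq_zero_iff x
  rw [← LinearMap.finrank_range_add_finrank_ker (H1π A).hom, LinearMap.range_eq_top.2 hsurj,
    finrank_top, hker,
    (Submodule.comapSubtypeEquivOfLe (coboundaries₁_le_cocycles₁ A)).finrank_eq]

end General

section FreeGroup

variable {k α : Type u} [CommRing k] (A : Rep k (FreeGroup α))

theorem exists_cocycles₁_freeGroup_of (v : α → A) :
    ∃ f : cocycles₁ A, ∀ a, f (FreeGroup.of a) = v a := by
  -- `f` is the translation part of a homomorphism into the affine group of `A` lifting `ρ`.
  let ρ' : FreeGroup α →* (A ≃ₗ[k] A) :=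
    (LinearMap.GeneralLinearGroup.generalLinearEquiv k A).toMonoidHom.comp A.ρ.asGroupHom
  let F : FreeGroup α →* (A ≃ᵃ[k] A) := FreeGroup.lift fun a =>
    AffineEquiv.constVAdd k A (v a) * (ρ' (FreeGroup.of a)).toAffineEquiv
  have hlin : AffineEquiv.linearHom.comp F = ρ' := FreeGroup.ext_hom _ _ fun a => by
    ext x
    rfl
  have hF : ∀ g x, F g x = A.ρ g x + F g 0 := fun g x => by
    have hl : (F g).linear x = A.ρ g x := LinearEquiv.congr_fun (DFunLike.congr_fun hlin g) x
    simpa [hl] using (F g).map_vadd 0 x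
  refine ⟨⟨fun g => F g 0, (mem_cocycles₁_iff _).2 fun g h => ?_⟩, fun a => ?_⟩
  · rw [map_mul, AffineEquiv.coe_mul, Function.comp_apply, hF]
  · simp [F]

def cocycles₁FreeGroupEquiv : cocycles₁ A ≃ₗ[k] (α → A) :=
  LinearEquiv.ofBijective
    { toFun := fun f a => f (FreeGroup.of a)
      map_add' := fun _ _ => rfl
      map_smul' := fun _ _ => rfl }
    ⟨(injective_iff_map_eq_zero _).2 fun f hf =>
      cocycles₁_eq_zero_of_closure_eq_top f (FreeGroup.closure_range_of α) <| by
        rintro _ ⟨a, rfl⟩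
        exact congrFun hf a,
    fun v => (exists_cocycles₁_freeGroup_of A v).imp fun _ hf => funext hf⟩

instance [Finite α] [Module.Finite k A] : Module.Finite k (cocycles₁ A) :=
  Module.Finite.equiv (cocycles₁FreeGroupEquiv A).symm

end FreeGroup

section CharRep

variable {G H : Type} [Group G] [Group H] {χ : G →* ℂˣ}

theorem charRep_ρ_apply (χ : G →* ℂˣ) (g : G) (z : ℂ) :
    (Rep.of (charRep χ)).ρ g z = χ g * z := rfl

theorem mem_cocycles₁_charRep_iff (f : G → ℂ) :
    f ∈ cocycles₁ (Rep.of (charRep χ)) ↔ ∀ g h, f (g * h) = χ g * f h + f g := by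
  rw [mem_cocycles₁_iff]
  rfl

theorem cocycles₁_charRep_eq_zero_of_commute (f : cocycles₁ (Rep.of (charRep χ))) {g h : G}
    (hgh : Commute g h) (hg : χ g ≠ 1) (hfg : f g = 0) : f h = 0 := by
  have key := cocycles₁_sub_eq_of_commute f hgh
  rw [charRep_ρ_apply, charRep_ρ_apply, hfg, mul_zero, sub_zero] at key
  have hg' : (χ g : ℂ) - 1 ≠ 0 := sub_ne_zero.2 (Units.val_eq_one.not.2 hg)
  exact (mul_eq_zero.1 (by linear_combination key : ((χ g : ℂ) - 1) * f h = 0)).resolve_left hg'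

def cocycles₁Comap (φ : H →* G) {ψ : H →* ℂˣ} (hψ : χ.comp φ = ψ) :
    cocycles₁ (Rep.of (charRep χ)) →ₗ[ℂ] cocycles₁ (Rep.of (charRep ψ)) where
  toFun f := ⟨f ∘ φ, (mem_cocycles₁_charRep_iff _).2 fun g h => by
    simp [← hψ, (mem_cocycles₁_charRep_iff f).1 f.2]⟩
  map_add' _ _ := rfl
  map_smul' _ _ := rfl

theorem finrank_coboundaries₁_charRep (hχ : χ ≠ 1) :
    finrank ℂ (coboundaries₁ (Rep.of (charRep χ))) = 1 := by
  obtain ⟨g, hg⟩ := DFunLike.ne_iff.1 hχ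
  have hg' : (χ g : ℂ) - 1 ≠ 0 := sub_ne_zero.2 (Units.val_eq_one.not.2 hg)
  have hinj : Function.Injective (d₀₁ (Rep.of (charRep χ))).hom := fun c c' hcc' => by
    have : (χ g : ℂ) * c - c = χ g * c' - c' := congrFun hcc' g
    exact sub_eq_zero.1 ((mul_eq_zero.1 (by linear_combination this :
      ((χ g : ℂ) - 1) * (c - c') = 0)).resolve_left hg')
  exact (LinearMap.finrank_range_of_inj hinj).trans (finrank_self ℂ)

theorem coboundaries₁_charRep_one : coboundaries₁ (Rep.of (charRep (1 : G →* ℂˣ))) = ⊥ := by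
  rw [eq_bot_iff]
  rintro _ ⟨c, rfl⟩
  exact (Submodule.mem_bot ℂ).2 (funext fun g => show ((1 : G →* ℂˣ) g : ℂ) * c - c = 0 by simp)

theorem finrank_H1_charRep (hχ : χ ≠ 1) [FiniteDimensional ℂ (cocycles₁ (Rep.of (charRep χ)))] :
    finrank ℂ (H1 (Rep.of (charRep χ))) = finrank ℂ (cocycles₁ (Rep.of (charRep χ))) - 1 := by
  have := finrank_H1_add_finrank_coboundaries₁ (Rep.of (charRep χ))
  rw [finrank_coboundaries₁_charRep hχ] at this
  omega

theorem finrank_H1_charRep_one [FiniteDimensional ℂ (cocycles₁ (Rep.of (charRep (1 : G →* ℂˣ))))] :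
    finrank ℂ (H1 (Rep.of (charRep (1 : G →* ℂˣ)))) =
      finrank ℂ (cocycles₁ (Rep.of (charRep (1 : G →* ℂˣ)))) := by
  have := finrank_H1_add_finrank_coboundaries₁ (Rep.of (charRep (1 : G →* ℂˣ)))
  rwa [coboundaries₁_charRep_one, finrank_bot, add_zero] at this

theorem finrank_cocycles₁_charRep_freeGroup {α : Type} [Fintype α] (χ : FreeGroup α →* ℂˣ) :
    finrank ℂ (cocycles₁ (Rep.of (charRep χ))) = Fintype.card α :=
  (cocycles₁FreeGroupEquiv _).finrank_eq.trans (finrank_fintype_fun_eq_card ℂ)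

end CharRep

section Pi

variable {ι : Type u} [Fintype ι] [DecidableEq ι] {G : ι → Type u} [∀ i, Group (G i)]

theorem cocycles₁_eq_zero_of_forall_mulSingle {k : Type u} [CommRing k] {A : Rep k (∀ i, G i)}
    (f : cocycles₁ A) (h : ∀ i x, f (Pi.mulSingle i x) = 0) : f = 0 :=
  cocycles₁_eq_zero_of_closure_eq_top f Subgroup.closure_iUnion_range_mulSingle <| by
    simp only [Set.mem_iUnion, Set.mem_range, forall_exists_index]
    rintro _ i x rfl
    exact h i x

end Pi

section PiCharRep

variable {ι : Type} [Fintype ι] [DecidableEq ι] {G : ι → Type} [∀ i, Group (G i)]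
  {χ : (∀ i, G i) →* ℂˣ}

theorem cocycles₁_charRep_le_coboundaries₁_of_ne {i j : ι} (hij : i ≠ j)
    (hi : χ.comp (MonoidHom.mulSingle G i) ≠ 1) (hj : χ.comp (MonoidHom.mulSingle G j) ≠ 1) :
    cocycles₁ (Rep.of (charRep χ)) ≤ coboundaries₁ (Rep.of (charRep χ)) := by
  obtain ⟨a, ha⟩ := DFunLike.ne_iff.1 hi
  obtain ⟨b, hb⟩ := DFunLike.ne_iff.1 hj
  have hb' : (χ (Pi.mulSingle j b) : ℂ) - 1 ≠ 0 := sub_ne_zero.2 (Units.val_eq_one.not.2 hb)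
  intro f hf
  let c : ℂ := f (Pi.mulSingle j b) / ((χ (Pi.mulSingle j b) : ℂ) - 1)
  let f' : cocycles₁ (Rep.of (charRep χ)) := ⟨f, hf⟩ - ⟨_, d₀₁_apply_mem_cocycles₁ c⟩
  have hf'b : f' (Pi.mulSingle j b) = 0 := by
    change f _ - ((χ (Pi.mulSingle j b) : ℂ) * c - c) = 0
    linear_combination -(mul_div_cancel₀ (f (Pi.mulSingle j b)) hb')
  have hf'ne : ∀ l ≠ j, ∀ x, f' (Pi.mulSingle l x) = 0 := fun l hl x =>
    cocycles₁_charRep_eq_zero_of_commute f' (Pi.mulSingle_commute hl.symm b x) hb hf'b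
  have hf' : f' = 0 := cocycles₁_eq_zero_of_forall_mulSingle f' fun l x => by
    rcases eq_or_ne l j with rfl | hl
    · exact cocycles₁_charRep_eq_zero_of_commute f' (Pi.mulSingle_commute hij a x) ha
        (hf'ne i hij a)
    · exact hf'ne l hl x
  exact ⟨c, congrArg Subtype.val (sub_eq_zero.1 hf').symm⟩

def cocycles₁CharRepRestrictEquiv (i₀ : ι) (hi₀ : χ.comp (MonoidHom.mulSingle G i₀) ≠ 1)
    (h : ∀ j ≠ i₀, χ.comp (MonoidHom.mulSingle G j) = 1) :
    cocycles₁ (Rep.of (charRep χ)) ≃ₗ[ℂ]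
      cocycles₁ (Rep.of (charRep (χ.comp (MonoidHom.mulSingle G i₀)))) :=
  have hχ : (χ.comp (MonoidHom.mulSingle G i₀)).comp (Pi.evalMonoidHom G i₀) = χ := by
    refine MonoidHom.ext_mulSingle fun j => ?_
    rcases eq_or_ne j i₀ with rfl | hj
    · ext x
      simp
    · ext x
      simp [Pi.mulSingle_eq_of_ne hj.symm, DFunLike.congr_fun (h j hj) x]
  LinearEquiv.ofBijective (cocycles₁Comap (MonoidHom.mulSingle G i₀) rfl)
    ⟨(injective_iff_map_eq_zero _).2 fun f hf => by
      have hf₀ : ∀ x, f (Pi.mulSingle i₀ x) = 0 := DFunLike.congr_fun hf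
      obtain ⟨a, ha⟩ := DFunLike.ne_iff.1 hi₀
      refine cocycles₁_eq_zero_of_forall_mulSingle f fun j x => ?_
      rcases eq_or_ne j i₀ with rfl | hj
      · exact hf₀ x
      · exact cocycles₁_charRep_eq_zero_of_commute f (Pi.mulSingle_commute hj.symm a x) ha
          (hf₀ a),
    fun f => ⟨cocycles₁Comap (Pi.evalMonoidHom G i₀) hχ f,
      cocycles₁_ext fun x => congrArg f (Pi.mulSingle_eq_same i₀ x)⟩⟩

def cocycles₁CharRepOnePiEquiv :
    cocycles₁ (Rep.of (charRep (1 : (∀ i, G i) →* ℂˣ))) ≃ₗ[ℂ]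
      ∀ i, cocycles₁ (Rep.of (charRep (1 : G i →* ℂˣ))) :=
  LinearEquiv.ofBijective
    (LinearMap.pi fun i => cocycles₁Comap (MonoidHom.mulSingle G i) (MonoidHom.one_comp _))
    ⟨(injective_iff_map_eq_zero _).2 fun f hf =>
      cocycles₁_eq_zero_of_forall_mulSingle f fun i => DFunLike.congr_fun (congrFun hf i),
    fun f => ⟨∑ i, cocycles₁Comap (Pi.evalMonoidHom G i) (MonoidHom.one_comp _) (f i),
      funext fun i => cocycles₁_ext fun x => by
        change (∑ l, cocycles₁Comap (Pi.evalMonoidHom G l) (MonoidHom.one_comp _) (f l)).1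
          (Pi.mulSingle i x) = f i x
        rw [Submodule.coe_sum, Finset.sum_apply, Finset.sum_eq_single i]
        · exact congrArg (f i) (Pi.mulSingle_eq_same i x)
        · intro l _ hl
          exact (congrArg (f l) (Pi.mulSingle_eq_of_ne hl x)).trans (cocycles₁_map_one _)
        · simp⟩⟩

end PiCharRep

end groupCohomology

open groupCohomology in
theorem h1_product_of_free_groups_general (ℓ : ℕ) (n : Fin ℓ → ℕ)
    (χ : (∀ i : Fin ℓ, FreeGroup (Fin (n i))) →* ℂˣ)
    (S : Set (Fin ℓ))
    (hS : S = { i : Fin ℓ |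
      χ.comp (MonoidHom.mulSingle (fun j : Fin ℓ => FreeGroup (Fin (n j))) i) ≠ 1 }) :
    (∀ i j : Fin ℓ, i ∈ S → j ∈ S → i ≠ j →
      Subsingleton (groupCohomology.H1 (Rep.of (charRep χ)))) ∧
    (∀ i₀ : Fin ℓ, S = {i₀} →
      Module.finrank ℂ (groupCohomology.H1 (Rep.of (charRep χ))) = n i₀ - 1) ∧
    (S = ∅ →
      Module.finrank ℂ (groupCohomology.H1 (Rep.of (charRep χ))) = ∑ i, n i) := by
  subst hS
  refine ⟨fun i j hi hj hij => ?_, fun i₀ hS => ?_, fun hS => ?_⟩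
  · exact subsingleton_H1_of_cocycles₁_le_coboundaries₁
      (cocycles₁_charRep_le_coboundaries₁_of_ne hij hi hj)
  · have hi₀ : i₀ ∈ _ := hS ▸ Set.mem_singleton i₀
    have e := cocycles₁CharRepRestrictEquiv i₀ hi₀ fun j hj => not_not.1 fun hj' =>
      hj (Set.eq_of_mem_singleton (hS ▸ hj'))
    have := e.symm.finiteDimensional
    rw [finrank_H1_charRep (fun h => hi₀ (by rw [h]; rfl)), e.finrank_eq,
      finrank_cocycles₁_charRep_freeGroup, Fintype.card_fin]
  · obtain rfl : χ = 1 := MonoidHom.ext_mulSingle fun i =>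
      not_not.1 fun hi => (hS ▸ hi : i ∈ (∅ : Set (Fin ℓ)))
    have e := cocycles₁CharRepOnePiEquiv (G := fun i => FreeGroup (Fin (n i)))
    have := e.symm.finiteDimensional
    rw [finrank_H1_charRep_one, e.finrank_eq, finrank_pi_fintype]
    simp [finrank_cocycles₁_charRep_freeGroup]

theorem h1_product_of_free_groups (ℓ : ℕ) (hℓ : 1 ≤ ℓ) (n : Fin ℓ → ℕ)
    (χ : (∀ i : Fin ℓ, FreeGroup (Fin (n i))) →* ℂˣ)
    (S : Set (Fin ℓ))
    (hS : S = { i : Fin ℓ |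
      χ.comp (MonoidHom.mulSingle (fun j : Fin ℓ => FreeGroup (Fin (n j))) i) ≠ 1 }) :
    (∀ i j : Fin ℓ, i ∈ S → j ∈ S → i ≠ j →
      Subsingleton (groupCohomology.H1 (Rep.of (charRep χ)))) ∧
    (∀ i₀ : Fin ℓ, S = {i₀} →
      Module.finrank ℂ (groupCohomology.H1 (Rep.of (charRep χ))) = n i₀ - 1) ∧
    (S = ∅ →
      Module.finrank ℂ (groupCohomology.H1 (Rep.of (charRep χ))) = ∑ i, n i) :=
  h1_product_of_free_groups_general ℓ n χ S hS
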